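/- Let K be a category, C a small category, φ : C → Set a weight, and S : C → PK a diagram; let S̄ : K^op → [C, Set] be the corresponding functor, S̄(A)(c) = S(c)(A) (it is pointwise small). Then the φ-weighted limit {φ, S} exists in PK if and only if the presheaf A ↦ {φ, S̄(A)} (the pointwise weighted limit) is a small presheaf, in which case this presheaf is the limit. Consequently, PK has all φ-weighted limits if and only if the presheaf A ↦ {φ, R(A)} is small for every small functor R : K^op → [C, Set]. -/

import Mathlib

open CategoryTheory CategoryTheory.Limits Opposite

universe w v v' u u'

/-- A functor `S : K ⥤ M` is (`w`-)small if it is the left Kan extension of its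
restriction to some small full subcategory of `K`. -/
def IsSmallFunctor {K : Type u} [Category.{v} K] {M : Type u'} [Category.{v'} M]
    (S : K ⥤ M) : Prop :=
  ∃ P : K → Prop, Small.{w} (Subtype P) ∧
    S.IsLeftKanExtension (𝟙 (ObjectProperty.ι P ⋙ S))

/-- Representable presheaves are small. -/
theorem isSmallFunctor_yoneda_obj {K : Type u} [Category.{v} K] (A : K) :
    IsSmallFunctor.{w} (yoneda.obj A) := by
  refine ⟨fun X => X = op A, ?_, ?_⟩
  · have : Subsingleton {X : Kᵒᵖ // X = op A} :=
      ⟨fun X Y => Subtype.ext (X.2.trans Y.2.symm)⟩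
    infer_instance
  · set P : Kᵒᵖ → Prop := fun X => X = op A with hP
    set ι := ObjectProperty.ι P with hι
    constructor
    refine ⟨IsInitial.ofUniqueHom (fun E => StructuredArrow.homMk
      (yonedaEquiv.symm (E.hom.app ⟨op A, rfl⟩ (𝟙 A))) ?_) ?_⟩
    · ext X f
      have hnat := types_congr_hom (E.hom.naturality
        (show (⟨op A, rfl⟩ : ObjectProperty.FullSubcategory P) ⟶ X from ObjectProperty.homMk f.op)) (𝟙 A)
      simp [yonedaEquiv_symm_app_apply, ι] at hnat ⊢
      exact hnat.symm
    · intro E m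
      apply StructuredArrow.hom_ext
      have hx := types_congr_hom (NatTrans.congr_app m.w ⟨op A, rfl⟩) (𝟙 A)
      have key : yonedaEquiv (m.right : yoneda.obj A ⟶ E.right) = E.hom.app ⟨op A, rfl⟩ (𝟙 A) := by
        exact hx
      exact (Equiv.eq_symm_apply _).mpr key

/-- The category of small presheaves on `K`. -/
abbrev SmallPresheaf (K : Type u) [Category.{v} K] : Type (max u (v + 1)) :=
  ObjectProperty.FullSubcategory (fun F : Kᵒᵖ ⥤ Type v => IsSmallFunctor.{v} F)

/-- The Yoneda embedding of `K` into its category of small presheaves. -/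
def smallYoneda (K : Type u) [Category.{v} K] : K ⥤ SmallPresheaf K where
  obj A := ⟨yoneda.obj A, isSmallFunctor_yoneda_obj A⟩
  map f := ObjectProperty.homMk (yoneda.map f)

/-- `L` is a limit of `S : C ⥤ A` weighted by `φ : C ⥤ Type v`, i.e. morphisms `a ⟶ L`
correspond, naturally in `a`, to natural transformations `φ ⟶ A(a, S-)`. -/
def IsWeightedLimit {C : Type u} [Category.{v} C] {A : Type u'} [Category.{v'} A]
    (φ : C ⥤ Type v) (S : C ⥤ A) (L : A) : Prop :=
  ∃ e : ∀ a : A, (a ⟶ L) ≃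
      ((φ ⋙ uliftFunctor.{v'}) ⟶ (S ⋙ coyoneda.obj (op a) ⋙ uliftFunctor.{v})),
    ∀ (a a' : A) (f : a' ⟶ a) (g : a ⟶ L) (c : C) (x : φ.obj c),
      (e a' (f ≫ g)).app c ⟨x⟩ = ⟨f ≫ ((e a g).app c ⟨x⟩).down⟩

/-- `L` is a colimit of `T : Cᵒᵖ ⥤ A` weighted by `φ : C ⥤ Type v`, i.e. morphisms `L ⟶ a`
correspond, naturally in `a`, to natural transformations `φ ⟶ A(T-, a)`. -/
def IsWeightedColimit {C : Type u} [Category.{v} C] {A : Type u'} [Category.{v'} A]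
    (φ : C ⥤ Type v) (T : Cᵒᵖ ⥤ A) (L : A) : Prop :=
  ∃ e : ∀ a : A, (L ⟶ a) ≃
      ((φ ⋙ uliftFunctor.{v'}) ⟶ (T.rightOp ⋙ yoneda.obj a ⋙ uliftFunctor.{v})),
    ∀ (a a' : A) (f : a ⟶ a') (g : L ⟶ a) (c : C) (x : φ.obj c),
      (e a' (g ≫ f)).app c ⟨x⟩ = ⟨((e a g).app c ⟨x⟩).down ≫ f⟩

/-- A class of weights with small domains. -/
def WeightClass : Type (v + 1) :=
  ∀ C : Cat.{v, v}, (C ⥤ Type v) → Prop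

/-- A category is `Φ`-complete if it has all `φ`-weighted limits for `φ ∈ Φ`. -/
def PhiComplete (Φ : WeightClass.{v}) (A : Type u) [Category.{v'} A] : Prop :=
  ∀ (C : Cat.{v, v}) (φ : C ⥤ Type v), Φ C φ →
    ∀ S : C ⥤ A, ∃ L : A, IsWeightedLimit φ S L

/-- A category is `Φ`-cocomplete if it has all `φ`-weighted colimits for `φ ∈ Φ`. -/
def PhiCocomplete (Φ : WeightClass.{v}) (A : Type u) [Category.{v'} A] : Prop :=
  ∀ (C : Cat.{v, v}) (φ : C ⥤ Type v), Φ C φ →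
    ∀ T : Cᵒᵖ ⥤ A, ∃ L : A, IsWeightedColimit φ T L

/-- A functor is `Φ`-continuous if it preserves all `φ`-weighted limits for `φ ∈ Φ`. -/
def PhiContinuous (Φ : WeightClass.{v}) {A : Type u} [Category.{v'} A]
    {B : Type u'} [Category.{w} B] (F : A ⥤ B) : Prop :=
  ∀ (C : Cat.{v, v}) (φ : C ⥤ Type v), Φ C φ →
    ∀ (S : C ⥤ A) (L : A), IsWeightedLimit φ S L → IsWeightedLimit φ (S ⋙ F) (F.obj L)

/-- The closure of a collection `P` of objects of `A` under `Φ`-weighted colimits. -/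
inductive PhiClosure (Φ : WeightClass.{v}) {A : Type u} [Category.{v'} A]
    (P : A → Prop) : A → Prop
  | base {X : A} (hX : P X) : PhiClosure Φ P X
  | colim {C : Cat.{v, v}} (φ : C ⥤ Type v) (hφ : Φ C φ) (T : Cᵒᵖ ⥤ A)
      (hT : ∀ c : Cᵒᵖ, PhiClosure Φ P (T.obj c)) {L : A}
      (hL : IsWeightedColimit φ T L) : PhiClosure Φ P L

/-- The smallness condition on a class of weights: for every small `C`, the closure of the
representables in the presheaf category of `C` under `Φ`-weighted colimits is small. -/
def SmallnessCondition (Φ : WeightClass.{v}) : Prop :=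
  ∀ C : Cat.{v, v}, EssentiallySmall.{v} (ObjectProperty.FullSubcategory (PhiClosure Φ
    (fun F : Cᵒᵖ ⥤ Type v => ∃ c : C, Nonempty (F ≅ yoneda.obj c))))

/-- The soundness condition on a class of weights: for every small `Φ`-complete `D` and every
`Φ`-continuous `ψ : D ⥤ Type v`, the weighted-colimit functor `ψ * (-) : [Dᵒᵖ, Type v] ⥤ Type v`
(i.e. the small-colimit-preserving extension of `ψ` along the Yoneda embedding) is
`Φ`-continuous. -/
def SoundnessCondition (Φ : WeightClass.{v}) : Prop :=
  ∀ D : Cat.{v, v}, PhiComplete Φ D → ∀ ψ : D ⥤ Type v, PhiContinuous Φ ψ →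
    ∀ T : (Dᵒᵖ ⥤ Type v) ⥤ Type v, PreservesColimitsOfSize.{v, v} T →
      Nonempty ((yoneda : D ⥤ _) ⋙ T ≅ ψ) → PhiContinuous Φ T

/-- `φ` belongs to the saturation of `Φ` if it lies in the closure of the representables
under `Φ`-weighted colimits in the presheaf category over its domain. -/
def InSaturation (Φ : WeightClass.{v}) (C : Cat.{v, v}) (φ : C ⥤ Type v) : Prop :=
  PhiClosure Φ (fun F : C ⥤ Type v => ∃ c : Cᵒᵖ, Nonempty (F ≅ coyoneda.obj c)) φ

/-- A category `J` is `α`-filtered when every diagram with fewer than `α` arrows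
admits a cocone. -/
def IsCardinalFiltered (J : Type u) [Category.{v'} J] (α : Cardinal.{v}) : Prop :=
  ∀ D : Cat.{v, v}, Cardinal.mk (Arrow D) < α → ∀ F : D ⥤ J, Nonempty (Cocone F)

/-- An object `X` is `α`-presentable when its hom-functor preserves `α`-filtered colimits. -/
def IsPresentableObj {K : Type u} [Category.{v} K] (α : Cardinal.{v}) (X : K) : Prop :=
  ∀ J : Cat.{v, v}, IsCardinalFiltered J α →
    PreservesColimitsOfShape J (coyoneda.obj (op X))

/-- `K` is locally `α`-presentable: it is cocomplete and has a small full subcategory of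
`α`-presentable objects such that every object is an `α`-filtered colimit of objects
from it. -/
def IsLocallyPresentableAt (K : Type u) [Category.{v} K] (α : Cardinal.{v}) : Prop :=
  HasColimitsOfSize.{v, v} K ∧ α.IsRegular ∧
    ∃ P : K → Prop, Small.{v} (Subtype P) ∧ (∀ X, P X → IsPresentableObj α X) ∧
      ∀ X : K, ∃ J : Cat.{v, v}, IsCardinalFiltered J α ∧
        ∃ (F : J ⥤ K) (c : Cocone F),
          (∀ j, P (F.obj j)) ∧ c.pt = X ∧ Nonempty (IsColimit c)

/-- `K` is locally presentable. -/
def IsLocallyPresentable (K : Type u) [Category.{v} K] : Prop :=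
  ∃ α : Cardinal.{v}, IsLocallyPresentableAt K α

/-- `PF : PK ⥤ PL` is the (essentially unique) functor sending a small presheaf `X` to the
left Kan extension of `X` along `Fᵒᵖ`. -/
def IsPshExtensionOf {K : Type u} {L : Type u'} [Category.{v} K] [Category.{v} L]
    (F : K ⥤ L) (PF : SmallPresheaf K ⥤ SmallPresheaf L) : Prop :=
  ∃ ε : ObjectProperty.ι (fun X : Kᵒᵖ ⥤ Type v => IsSmallFunctor.{v} X) ⟶
      PF ⋙ ObjectProperty.ι (fun X : Lᵒᵖ ⥤ Type v => IsSmallFunctor.{v} X) ⋙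
        (Functor.whiskeringLeft Kᵒᵖ Lᵒᵖ (Type v)).obj F.op,
    ∀ X : SmallPresheaf K, Functor.IsLeftKanExtension ((PF.obj X).obj) (ε.app X)

open MonoidalCategory in
/-- `D` is the Day convolution `∫^{A,B} K(-, A ⊗ B) × F A × G B` of the presheaves
`F` and `G`: it carries a universal wedge. -/
def IsDayConvolution {K : Type u} [Category.{v} K] [MonoidalCategory K]
    (F G D : Kᵒᵖ ⥤ Type v) : Prop :=
  ∃ u : ∀ A B : K, F.obj (op A) → G.obj (op B) → D.obj (op (A ⊗ B)),
    (∀ (A A' B B' : K) (f : A' ⟶ A) (g : B' ⟶ B) (x : F.obj (op A)) (y : G.obj (op B)),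
      u A' B' (F.map f.op x) (G.map g.op y)
        = D.map (MonoidalCategory.tensorHom f g).op (u A B x y)) ∧
    ∀ (H : Kᵒᵖ ⥤ Type v)
      (p : ∀ A B : K, F.obj (op A) → G.obj (op B) → H.obj (op (A ⊗ B))),
      (∀ (A A' B B' : K) (f : A' ⟶ A) (g : B' ⟶ B) (x : F.obj (op A)) (y : G.obj (op B)),
        p A' B' (F.map f.op x) (G.map g.op y)
          = H.map (MonoidalCategory.tensorHom f g).op (p A B x y)) →
      ∃! τ : D ⟶ H, ∀ (A B : K) (x : F.obj (op A)) (y : G.obj (op B)),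
        τ.app (op (A ⊗ B)) (u A B x y) = p A B x y

/-- The restricted Yoneda embedding of `M` into presheaves on the full subcategory of
`β`-presentable objects. -/
def restrictedYoneda (M : Type u) [Category.{v} M] (β : Cardinal.{v}) :
    M ⥤ ((ObjectProperty.FullSubcategory (IsPresentableObj β : M → Prop))ᵒᵖ ⥤ Type v) :=
  yoneda ⋙ (Functor.whiskeringLeft _ _ _).obj (ObjectProperty.ι _).op

/-!
A diagram `S : C ⥤ PK` is the same as `S̄ : Kᵒᵖ ⥤ [C, Set]`, and maps `a ⟶ S̄ ⋙ {φ, -}`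
of presheaves correspond (Fubini) to `φ`-weighted cones over `S` with vertex `a`. So whenever
the pointwise limit `A ↦ {φ, S̄ A}` is small it is the weighted limit in `PK`; conversely a
weighted limit `L` in `PK`, tested against the representables (which are small), has
`L(A) ≅ {φ, S̄ A}` by Yoneda, so the pointwise limit is small.

For the second part, `R : Kᵒᵖ ⥤ [C, Set]` is small iff all its components `R(-)(c)` are: one
direction because evaluation at `c` is a left adjoint, hence preserves left Kan extensions; the
other because `C` is small, so the union of the small subcategories witnessing the smallness of
the components is small, and a left Kan extension of a `Set`-valued functor from a full
subcategory is also one from any larger full subcategory.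
-/

namespace CategoryTheory.Functor

variable {C D H : Type*} [Category* C] [Category* D] [Category* H]

theorem isLeftKanExtension_of_bijective {L : C ⥤ D} {F : C ⥤ H} {F' : D ⥤ H}
    (α : F ⟶ L ⋙ F')
    (h : ∀ G : D ⥤ H, Function.Bijective fun β : F' ⟶ G => α ≫ whiskerLeft L β) :
    F'.IsLeftKanExtension α where
  nonempty_isUniversal := ⟨IsInitial.ofUniqueHom
    (fun E => StructuredArrow.homMk ((h E.right).2 E.hom).choose ((h E.right).2 E.hom).choose_spec)
    (fun E m => StructuredArrow.hom_ext _ _ <| (h E.right).1 <|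
      (StructuredArrow.w m).trans ((h E.right).2 E.hom).choose_spec.symm)⟩

theorem isLeftKanExtension_comp_of_adjunction {N : Type*} [Category* N] {E : H ⥤ N}
    {U : N ⥤ H} (adj : E ⊣ U) {L : C ⥤ D} {F : C ⥤ H} (F' : D ⥤ H) (α : F ⟶ L ⋙ F')
    [F'.IsLeftKanExtension α] :
    (F' ⋙ E).IsLeftKanExtension (whiskerRight α E : F ⋙ E ⟶ L ⋙ F' ⋙ E) := by
  refine isLeftKanExtension_of_bijective _ fun G => ?_
  have key : (fun β : F' ⋙ E ⟶ G => whiskerRight α E ≫ whiskerLeft L β) =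
      ((adj.whiskerRight C).homEquiv F (L ⋙ G)).symm ∘
        homEquivOfIsLeftKanExtension F' α (G ⋙ U) ∘ (adj.whiskerRight D).homEquiv F' G := by
    funext β
    apply ((adj.whiskerRight C).homEquiv F (L ⋙ G)).injective
    ext c
    rw [Function.comp_apply, Function.comp_apply, Equiv.apply_symm_apply]
    simp only [Adjunction.homEquiv_unit]
    simp
  exact key ▸ (Equiv.bijective _).comp ((Equiv.bijective _).comp (Equiv.bijective _))

/-- The subfunctor of elements coming from `P` agrees with `F` on `P`, so the universal
property of `F` splits its inclusion. -/
theorem exists_map_eq_of_isLeftKanExtension {P : ObjectProperty C} (F : C ⥤ Type*)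
    [F.IsLeftKanExtension (𝟙 (P.ι ⋙ F))] {X : C} (x : F.obj X) :
    ∃ (a : C) (_ : P a) (f : a ⟶ X) (y : F.obj a), F.map f y = x := by
  let G : Subfunctor F :=
    { obj := fun X => {x | ∃ (a : C) (_ : P a) (f : a ⟶ X) (y : F.obj a), F.map f y = x}
      map := by
        rintro X X' g - ⟨a, ha, f, y, rfl⟩
        exact ⟨a, ha, f ≫ g, y, by simp⟩ }
  let s : P.ι ⋙ F ⟶ P.ι ⋙ G.toFunctor :=
    { app := fun a => TypeCat.ofHom fun y => ⟨y, a.obj, a.property, 𝟙 _, y, by simp⟩ }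
  have hsection : descOfIsLeftKanExtension F (𝟙 _) G.toFunctor s ≫ G.ι = 𝟙 F :=
    hom_ext_of_isLeftKanExtension (L := P.ι) F (𝟙 _) _ _ <| by
      ext a y
      exact congrArg Subtype.val <| ConcreteCategory.congr_hom
        ((Category.id_comp _).symm.trans
          (descOfIsLeftKanExtension_fac_app F (𝟙 _) G.toFunctor s a)) y
  have hx := ConcreteCategory.congr_hom (NatTrans.congr_app hsection X) x
  simp only [NatTrans.comp_app, NatTrans.id_app, types_comp_apply, types_id_apply] at hx
  exact hx ▸ ((descOfIsLeftKanExtension F (𝟙 _) G.toFunctor s).app X x).property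

theorem isLeftKanExtension_of_le {P Q : ObjectProperty C} (hPQ : P ≤ Q) (F : C ⥤ Type*)
    [F.IsLeftKanExtension (𝟙 (P.ι ⋙ F))] : F.IsLeftKanExtension (𝟙 (Q.ι ⋙ F)) := by
  refine isLeftKanExtension_of_bijective _ fun G => ⟨fun β₁ β₂ h => ?_, fun γ => ?_⟩
  · refine hom_ext_of_isLeftKanExtension (L := P.ι) F (𝟙 _) _ _ ?_
    simp only [Category.id_comp] at h ⊢
    exact congrArg (whiskerLeft (ObjectProperty.ιOfLE hPQ)) h
  · let θ := descOfIsLeftKanExtension F (𝟙 (P.ι ⋙ F)) G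
      (whiskerLeft (ObjectProperty.ιOfLE hPQ) γ)
    refine ⟨θ, ?_⟩
    ext b x
    obtain ⟨a, ha, f, y, rfl⟩ := exists_map_eq_of_isLeftKanExtension F (P := P) x
    have hθ : θ.app a = γ.app ⟨a, hPQ _ ha⟩ :=
      (Category.id_comp _).symm.trans (descOfIsLeftKanExtension_fac_app F (𝟙 (P.ι ⋙ F)) G
        (whiskerLeft (ObjectProperty.ιOfLE hPQ) γ) ⟨a, ha⟩)
    simpa [hθ] using (γ.naturality_apply
      (ObjectProperty.homMk f : (⟨a, hPQ _ ha⟩ : Q.FullSubcategory) ⟶ b) y).symm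

theorem isLeftKanExtension_of_flip_obj {P : ObjectProperty C} (R : C ⥤ D ⥤ H)
    [∀ d, (R.flip.obj d).IsLeftKanExtension (𝟙 (P.ι ⋙ R.flip.obj d))] :
    R.IsLeftKanExtension (𝟙 (P.ι ⋙ R)) := by
  refine isLeftKanExtension_of_bijective _ fun G => ⟨fun β₁ β₂ h => ?_, fun γ => ?_⟩
  · ext c d
    have hd := hom_ext_of_isLeftKanExtension (L := P.ι) (R.flip.obj d) (𝟙 _)
      (((flipFunctor _ _ _).map β₁).app d) (((flipFunctor _ _ _).map β₂).app d) (by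
        ext a
        exact congr_app (congr_app h a) d)
    exact congr_app hd c
  · let θ (d : D) : R.flip.obj d ⟶ G.flip.obj d :=
      descOfIsLeftKanExtension (R.flip.obj d) (𝟙 _) (G.flip.obj d)
        (whiskerRight γ ((evaluation D H).obj d))
    have hθ (d : D) (a : P.FullSubcategory) : (θ d).app a.obj = (γ.app a).app d := by
      simpa using descOfIsLeftKanExtension_fac_app (R.flip.obj d) (𝟙 _) (G.flip.obj d)
        (whiskerRight γ ((evaluation D H).obj d)) a
    let Θ : R.flip ⟶ G.flip :=
      { app := θ
        naturality := fun d d' g => hom_ext_of_isLeftKanExtension (L := P.ι) _ (𝟙 _) _ _ (by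
          ext a
          simp [hθ]) }
    refine ⟨(flipFunctor _ _ _).map Θ, ?_⟩
    ext a d
    simpa using hθ d a

end CategoryTheory.Functor

namespace IsSmallFunctor

variable {K : Type u} [Category.{v} K] {M : Type u'} [Category.{v'} M]

theorem of_iso {S S' : K ⥤ M} (e : S ≅ S') (h : IsSmallFunctor.{w} S) :
    IsSmallFunctor.{w} S' := by
  obtain ⟨P, hP, hS⟩ := h
  exact ⟨P, hP, (Functor.isLeftKanExtension_iff_of_iso₂ _ _ (Functor.isoWhiskerLeft _ e) e
    (by simp)).1 hS⟩

theorem comp_isLeftAdjoint {N : Type*} [Category* N] {S : K ⥤ M} (h : IsSmallFunctor.{w} S)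
    (E : M ⥤ N) [E.IsLeftAdjoint] : IsSmallFunctor.{w} (S ⋙ E) := by
  obtain ⟨P, hP, hS⟩ := h
  refine ⟨P, hP, ?_⟩
  have := Functor.isLeftKanExtension_comp_of_adjunction (Adjunction.ofIsLeftAdjoint E) S
    (𝟙 (ObjectProperty.ι P ⋙ S))
  rw [Functor.whiskerRight_id'] at this
  exact this

theorem of_flip_obj {C : Type*} [Category* C] [Small.{w} C] {R : K ⥤ C ⥤ Type*}
    (h : ∀ c, IsSmallFunctor.{w} (R.flip.obj c)) : IsSmallFunctor.{w} R := by
  choose P hP hR using h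
  refine ⟨fun X => ∃ c, P c X, ?_, ?_⟩
  · exact small_of_surjective (f := fun p : Σ c, Subtype (P c) =>
      (⟨p.2.1, p.1, p.2.2⟩ : Subtype fun X => ∃ c, P c X))
      fun ⟨X, c, hX⟩ => ⟨⟨c, X, hX⟩, rfl⟩
  · have (c : C) := Functor.isLeftKanExtension_of_le (P := P c) (Q := fun X => ∃ c, P c X)
      (fun _ hX => ⟨c, hX⟩) (R.flip.obj c)
    exact Functor.isLeftKanExtension_of_flip_obj R

end IsSmallFunctor

def isoOfYonedaHomEquiv {K : Type u} [Category.{v} K] {F G : Kᵒᵖ ⥤ Type v}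
    (e : ∀ X : K, (yoneda.obj X ⟶ F) ≃ (yoneda.obj X ⟶ G))
    (he : ∀ {X Y : K} (f : Y ⟶ X) (τ : yoneda.obj X ⟶ F),
      e Y (yoneda.map f ≫ τ) = yoneda.map f ≫ e X τ) : F ≅ G :=
  NatIso.ofComponents (fun X => Equiv.toIso (yonedaEquiv.symm.trans ((e X.unop).trans yonedaEquiv)))
    fun {X Y} f => by
      ext x
      change yonedaEquiv (e Y.unop (yonedaEquiv.symm (F.map f x))) =
        G.map f (yonedaEquiv (e X.unop (yonedaEquiv.symm x)))
      rw [yonedaEquiv_symm_map, he, yonedaEquiv_naturality']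

section PointwiseWeightedLimit

variable {K : Type u} [Category.{v} K] {C : Type v} [Category.{v} C] (φ : C ⥤ Type v)

abbrev pointwiseWeightedLimit (S : C ⥤ SmallPresheaf K) : Kᵒᵖ ⥤ Type v :=
  (S ⋙ ObjectProperty.ι _).flip ⋙ coyoneda.obj (op φ)

/-- Both sides are families `a(X) × φ(c) → S(c)(X)` natural in `X` and in `c`. -/
def weightedConeEquiv (S : C ⥤ SmallPresheaf K) (a : SmallPresheaf K) :
    (a.obj ⟶ pointwiseWeightedLimit φ S) ≃
      ((φ ⋙ uliftFunctor.{max u v}) ⟶ (S ⋙ coyoneda.obj (op a) ⋙ uliftFunctor.{v})) where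
  toFun τ :=
    { app := fun c => TypeCat.ofHom fun x =>
        ⟨ObjectProperty.homMk
          { app := fun X => TypeCat.ofHom fun y => (τ.app X y).app c x.down
            naturality := fun {X X'} f => by
              ext y
              exact congr_arg (fun t : φ ⟶ _ => t.app c x.down) (τ.naturality_apply f y) }⟩
      naturality := fun {c c'} h => by
        ext x
        refine congrArg ULift.up (ObjectProperty.hom_ext _ (NatTrans.ext ?_))
        ext X y
        exact (τ.app X y).naturality_apply h x.down }
  invFun σ :=
    { app := fun X => TypeCat.ofHom fun y =>
        { app := fun c => TypeCat.ofHom fun x => (σ.app c ⟨x⟩).down.hom.app X y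
          naturality := fun {c c'} h => by
            ext x
            exact congrArg (fun t => t.down.hom.app X y) (σ.naturality_apply h ⟨x⟩) }
      naturality := fun {X X'} f => by
        ext y
        refine NatTrans.ext (funext fun c => ?_)
        ext x
        exact (σ.app c ⟨x⟩).down.hom.naturality_apply f y }
  left_inv _ := rfl
  right_inv _ := rfl

theorem isWeightedLimit_of_isSmallFunctor {S : C ⥤ SmallPresheaf K}
    (h : IsSmallFunctor.{v} (pointwiseWeightedLimit φ S)) :
    IsWeightedLimit φ S (⟨_, h⟩ : SmallPresheaf K) :=
  ⟨fun a => (ObjectProperty.fullyFaithfulι _).homEquiv.trans (weightedConeEquiv φ S a),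
    fun _ _ _ _ _ _ => rfl⟩

theorem isSmallFunctor_of_isWeightedLimit {S : C ⥤ SmallPresheaf K} {L : SmallPresheaf K}
    (hL : IsWeightedLimit φ S L) : IsSmallFunctor.{v} (pointwiseWeightedLimit φ S) := by
  obtain ⟨e, he⟩ := hL
  refine L.property.of_iso (isoOfYonedaHomEquiv (fun X =>
    ((ObjectProperty.fullyFaithfulι _).homEquiv.symm.trans (e ((smallYoneda K).obj X))).trans
      (weightedConeEquiv φ S _).symm) fun {X Y} f τ => ?_)
  apply (weightedConeEquiv φ S _).injective
  ext c x
  exact he _ _ ((smallYoneda K).map f) _ c x.down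

end PointwiseWeightedLimit

/-- For a weight `φ : C ⥤ Set` and a diagram `S : C ⥤ PK`, the weighted limit
`{φ, S}` exists in `PK` iff the pointwise weighted limit presheaf `A ↦ {φ, S̄ A}` is small,
in which case that presheaf is the limit; consequently `PK` has all `φ`-weighted limits iff
`A ↦ {φ, R A}` is small for every small `R : Kᵒᵖ ⥤ [C, Set]`. -/
theorem statement2 {K : Type u} [Category.{v} K] (C : Cat.{v, v}) (φ : C ⥤ Type v) :
    (∀ S : C ⥤ SmallPresheaf K,
      ((∃ L, IsWeightedLimit φ S L) ↔
        IsSmallFunctor.{v}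
          ((S ⋙ ObjectProperty.ι
            (fun F : Kᵒᵖ ⥤ Type v => IsSmallFunctor.{v} F)).flip ⋙ coyoneda.obj (op φ))) ∧
      (∀ h : IsSmallFunctor.{v}
          ((S ⋙ ObjectProperty.ι
            (fun F : Kᵒᵖ ⥤ Type v => IsSmallFunctor.{v} F)).flip ⋙ coyoneda.obj (op φ)),
        IsWeightedLimit φ S ⟨_, h⟩)) ∧
    ((∀ S : C ⥤ SmallPresheaf K, ∃ L, IsWeightedLimit φ S L) ↔
      ∀ R : Kᵒᵖ ⥤ (C ⥤ Type v), IsSmallFunctor.{v} R →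
        IsSmallFunctor.{v} (R ⋙ coyoneda.obj (op φ))) := by
  have hlim (S : C ⥤ SmallPresheaf K) :
      (∃ L, IsWeightedLimit φ S L) ↔ IsSmallFunctor.{v} (pointwiseWeightedLimit φ S) :=
    ⟨fun ⟨_, hL⟩ => isSmallFunctor_of_isWeightedLimit φ hL,
      fun h => ⟨_, isWeightedLimit_of_isSmallFunctor φ h⟩⟩
  refine ⟨fun S => ⟨hlim S, isWeightedLimit_of_isSmallFunctor φ⟩, fun hall R hR => ?_,
    fun hsmall S => ?_⟩
  · exact (hlim (ObjectProperty.lift _ R.flip fun c =>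
      hR.comp_isLeftAdjoint ((evaluation C (Type v)).obj c))).1 (hall _)
  · exact (hlim S).2 (hsmall _ (IsSmallFunctor.of_flip_obj fun c => (S.obj c).property))
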